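/- With the setup below, there exists R₀ < ∞ depending only on d such that for all R ≥ max(R₀, 2·max_{3≤i≤d}|p_i|) and all integers m ≠ n, m, n ≥ 1, the sets of lines ℒ_{𝔠_{1,m}} ∩ ℒ_{B¹_{R^m}} and ℒ_{𝔠_{1,n}} ∩ ℒ_{B¹_{R^n}} are disjoint; in particular no line of ℝ^d intersects all four of the sets 𝔠_{1,m}, B¹_{R^m}, 𝔠_{1,n}, B¹_{R^n}. -/

import Mathlib

open MeasureTheory
open scoped ENNReal

noncomputable section

/-- A line in `ℝ^d`: a set of the form `{a + t • v : t ∈ ℝ}` with `v ≠ 0`. -/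
def IsLine {d : ℕ} (L : Set (EuclideanSpace ℝ (Fin d))) : Prop :=
  ∃ a v : EuclideanSpace ℝ (Fin d), v ≠ 0 ∧ L = {x | ∃ t : ℝ, x = a + t • v}

/-- The standard basis vector of `ℝ^d` with a `1` in (0-indexed) coordinate `i`
(junk value `0` if `i ≥ d`). -/
def stdv (d i : ℕ) : EuclideanSpace ℝ (Fin d) :=
  if h : i < d then EuclideanSpace.single (⟨i, h⟩ : Fin d) 1 else 0

/-- The (0-indexed) `i`-th coordinate of a vector (junk value `0` if `i ≥ d`). -/
def coordNat {d : ℕ} (x : EuclideanSpace ℝ (Fin d)) (i : ℕ) : ℝ :=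
  if h : i < d then x ⟨i, h⟩ else 0

/-- The cylinder of radius `r` around a set `L`. -/
def cylinder {d : ℕ} (L : Set (EuclideanSpace ℝ (Fin d))) (r : ℝ) :
    Set (EuclideanSpace ℝ (Fin d)) :=
  {x | Metric.infDist x L ≤ r}

/-- The line `L₁ = {t • e₁ : t ∈ ℝ}`. -/
def lineOne (d : ℕ) : Set (EuclideanSpace ℝ (Fin d)) := {x | ∃ t : ℝ, x = t • stdv d 0}

/-- The cylinder `𝔠₁` of radius `√d` around `L₁`. -/
def cylOne (d : ℕ) : Set (EuclideanSpace ℝ (Fin d)) := cylinder (lineOne d) (Real.sqrt d)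

/-- The piece `𝔠_{1,m} = {x ∈ 𝔠₁ : R^{m-1}/2 ≤ |x₁| < R^m/2 - 10√d}`. -/
def cylOnePiece (d : ℕ) (R : ℝ) (m : ℕ) : Set (EuclideanSpace ℝ (Fin d)) :=
  {x ∈ cylOne d | R ^ (m - 1) / 2 ≤ |coordNat x 0| ∧
    |coordNat x 0| < R ^ m / 2 - 10 * Real.sqrt d}

/-- The direction vector `(l₁, l₂, 0, …, 0)` of the line `L₂`. -/
def dirTwo (d : ℕ) (l1 l2 : ℝ) : EuclideanSpace ℝ (Fin d) := l1 • stdv d 0 + l2 • stdv d 1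

/-- The line `L₂ = {p + t • (l₁, l₂, 0, …, 0) : t ∈ ℝ}`. -/
def lineTwo (d : ℕ) (p : EuclideanSpace ℝ (Fin d)) (l1 l2 : ℝ) :
    Set (EuclideanSpace ℝ (Fin d)) :=
  {x | ∃ t : ℝ, x = p + t • dirTwo d l1 l2}

/-- The cylinder `𝔠₂` of radius `√d` around `L₂`. -/
def cylTwo (d : ℕ) (p : EuclideanSpace ℝ (Fin d)) (l1 l2 : ℝ) :
    Set (EuclideanSpace ℝ (Fin d)) :=
  cylinder (lineTwo d p l1 l2) (Real.sqrt d)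

/-- Orthogonal projection onto the affine line `L₂` (valid when `(l₁,l₂)` is a unit vector). -/
def projLineTwo (d : ℕ) (p : EuclideanSpace ℝ (Fin d)) (l1 l2 : ℝ)
    (x : EuclideanSpace ℝ (Fin d)) : EuclideanSpace ℝ (Fin d) :=
  p + (inner ℝ (x - p) (dirTwo d l1 l2) : ℝ) • dirTwo d l1 l2

/-- The piece `𝔠_{2,m} = {x ∈ 𝔠₂ : R^{m-1}/2 ≤ |Π_{L₂}(x) - p| < R^m/2 - 10√d}`. -/
def cylTwoPiece (d : ℕ) (p : EuclideanSpace ℝ (Fin d)) (l1 l2 R : ℝ) (m : ℕ) :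
    Set (EuclideanSpace ℝ (Fin d)) :=
  {x ∈ cylTwo d p l1 l2 | R ^ (m - 1) / 2 ≤ dist (projLineTwo d p l1 l2 x) p ∧
    dist (projLineTwo d p l1 l2 x) p < R ^ m / 2 - 10 * Real.sqrt d}

/-- The point `q_{i,m} = p + N·R^m·e_{i+3}` (`i` is 1-based), where `N = 10d + 1`. -/
def qpt (d : ℕ) (p : EuclideanSpace ℝ (Fin d)) (R : ℝ) (m i : ℕ) :
    EuclideanSpace ℝ (Fin d) :=
  p + ((10 * d + 1 : ℝ) * R ^ m) • stdv d (i + 2)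

/-- The box `B^i_{R^m} = q_{i,m} + [-R^m/2, R^m/2]^d` (`i` is 1-based). -/
def bigBox (d : ℕ) (p : EuclideanSpace ℝ (Fin d)) (R : ℝ) (m i : ℕ) :
    Set (EuclideanSpace ℝ (Fin d)) :=
  {x | ∀ j : Fin d, |x j - qpt d p R m i j| ≤ R ^ m / 2}

/-- A line `L` meets both sets `S` and `T`, i.e. `L ∈ ℒ_S ∩ ℒ_T`. -/
def meets {d : ℕ} (L S T : Set (EuclideanSpace ℝ (Fin d))) : Prop :=
  (L ∩ S).Nonempty ∧ (L ∩ T).Nonempty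

/-! Suppose `m < n` and a line meets `𝔠_{1,m}` at `A`, `𝔠_{1,n}` at `B` and `B¹_{R^m}` at `C`, and
compare its increments in the coordinates `x₁` and `x₄`. From `A` to `B` it advances at least
`10√d` in `x₁` (the pieces are separated) but at most `2√d` in `x₄` (both points lie in the
cylinder). From `A` to `C` it advances at most `2R^m` in `x₁` but at least `38R^m` in `x₄`, since
the box sits at height about `N·R^m` over the axis. The two ratios `Δx₄ / Δx₁` cannot agree. -/

lemma IsLine.sub_mul_sub_comm {d : ℕ} {L : Set (EuclideanSpace ℝ (Fin d))} (hL : IsLine L)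
    {x y z : EuclideanSpace ℝ (Fin d)} (hx : x ∈ L) (hy : y ∈ L) (hz : z ∈ L) (i j : Fin d) :
    (y i - x i) * (z j - x j) = (y j - x j) * (z i - x i) := by
  obtain ⟨a, v, -, rfl⟩ := hL
  obtain ⟨tx, rfl⟩ := hx
  obtain ⟨ty, rfl⟩ := hy
  obtain ⟨tz, rfl⟩ := hz
  simp only [PiLp.add_apply, PiLp.smul_apply, smul_eq_mul]
  ring

lemma stdv_apply {d : ℕ} (i : ℕ) (j : Fin d) : stdv d i j = if (j : ℕ) = i then 1 else 0 := by
  unfold stdv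
  split_ifs <;> simp_all [PiLp.single_apply, Fin.ext_iff]
  omega

lemma coordNat_of_lt {d i : ℕ} (x : EuclideanSpace ℝ (Fin d)) (h : i < d) :
    coordNat x i = x ⟨i, h⟩ :=
  dif_pos h

lemma abs_apply_le_infDist {ι : Type*} [Fintype ι] {L : Set (EuclideanSpace ℝ ι)}
    (hL : L.Nonempty) {j : ι} (hLj : ∀ y ∈ L, y j = 0) (x : EuclideanSpace ℝ ι) :
    |x j| ≤ Metric.infDist x L :=
  (Metric.le_infDist hL).2 fun y hy => by
    simpa [hLj y hy, Real.dist_eq] using PiLp.dist_apply_le x y j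

lemma abs_apply_le_of_mem_cylOne {d : ℕ} {x : EuclideanSpace ℝ (Fin d)} (hx : x ∈ cylOne d)
    {j : Fin d} (hj : (j : ℕ) ≠ 0) : |x j| ≤ √d :=
  (abs_apply_le_infDist (⟨0, 0, by simp⟩ : (lineOne d).Nonempty)
    (by rintro _ ⟨t, rfl⟩; simp [stdv_apply, hj]) x).trans hx

lemma le_abs_sub_of_mem_cylOnePiece {d : ℕ} {R : ℝ} (hR : 1 ≤ R) {m n : ℕ} (hmn : m < n)
    {x y : EuclideanSpace ℝ (Fin d)} (hx : x ∈ cylOnePiece d R m) (hy : y ∈ cylOnePiece d R n) :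
    10 * √d ≤ |coordNat y 0 - coordNat x 0| := by
  have hpow : R ^ m ≤ R ^ (n - 1) := pow_le_pow_right₀ hR (by omega)
  linarith [hx.2.2, hy.2.1, abs_sub_abs_le_abs_sub (coordNat y 0) (coordNat x 0)]

lemma qpt_apply (d : ℕ) (p : EuclideanSpace ℝ (Fin d)) (R : ℝ) (m i : ℕ) (j : Fin d) :
    qpt d p R m i j = p j + if (j : ℕ) = i + 2 then (10 * d + 1) * R ^ m else 0 := by
  simp only [qpt, PiLp.add_apply, PiLp.smul_apply, stdv_apply, smul_eq_mul]
  split_ifs <;> simp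

lemma abs_apply_sub_le_of_mem_bigBox {d : ℕ} {p x : EuclideanSpace ℝ (Fin d)} {R : ℝ} {m i : ℕ}
    (hx : x ∈ bigBox d p R m i) {j : Fin d} (hj : (j : ℕ) ≠ i + 2) : |x j - p j| ≤ R ^ m / 2 := by
  simpa [qpt_apply, hj] using hx j

lemma le_apply_of_mem_bigBox {d : ℕ} {p x : EuclideanSpace ℝ (Fin d)} {R : ℝ} {m i : ℕ}
    (hx : x ∈ bigBox d p R m i) {j : Fin d} (hj : (j : ℕ) = i + 2) :
    p j + (10 * d + 1 / 2) * R ^ m ≤ x j := by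
  have := (abs_le.1 (hx j)).1
  rw [qpt_apply, if_pos hj] at this
  linarith

section

variable {d : ℕ} {p x y : EuclideanSpace ℝ (Fin d)} {R : ℝ} {m : ℕ}

lemma abs_apply_sub_le_of_mem_bigBox_of_mem_cylOnePiece (hR : 1 ≤ R) (hm : 1 ≤ m)
    (hpR : ∀ i : Fin d, 2 * |p i| ≤ R) (hx : x ∈ bigBox d p R m 1) (hy : y ∈ cylOnePiece d R m)
    (j : Fin d) (hj : (j : ℕ) = 0) : |x j - y j| ≤ 2 * R ^ m := by
  have hRm : R ≤ R ^ m := le_self_pow₀ hR (by omega)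
  have hx₁ := abs_apply_sub_le_of_mem_bigBox hx (j := j) (by omega)
  have hy₁ : |y j| < R ^ m / 2 := by
    have := hy.2.2
    rw [coordNat_of_lt _ (hj ▸ j.2), show (⟨0, _⟩ : Fin d) = j from Fin.ext hj.symm] at this
    linarith [Real.sqrt_nonneg d]
  linarith [hpR j, abs_sub_le (x j) (p j) (y j), abs_sub (p j) (y j)]

lemma le_abs_apply_sub_of_mem_bigBox_of_mem_cylOne (hd : 4 ≤ d) (hR : d ≤ R) (hm : 1 ≤ m)
    (hpR : ∀ i : Fin d, 2 * |p i| ≤ R) (hx : x ∈ bigBox d p R m 1) (hy : y ∈ cylOne d)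
    (j : Fin d) (hj : (j : ℕ) = 3) : 38 * R ^ m ≤ |x j - y j| := by
  have hd' : (4 : ℝ) ≤ d := by exact_mod_cast hd
  have hRm : R ≤ R ^ m := le_self_pow₀ (by linarith) (by omega)
  have hx₄ := le_apply_of_mem_bigBox hx hj
  have hy₄ := abs_apply_le_of_mem_cylOne hy (j := j) (by omega)
  have hN : (40 : ℝ) * R ^ m ≤ (10 * d + 1 / 2) * R ^ m :=
    mul_le_mul_of_nonneg_right (by linarith) (pow_nonneg (by linarith) m)
  have hsR : √(d : ℝ) ≤ R := (Real.sqrt_le_self_iff.2 (Or.inr (by linarith))).trans hR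
  linarith [hpR j, neg_abs_le (p j), le_abs_self (y j),
    le_abs_self (x j - y j)]

lemma IsLine.inter_cylOnePiece_eq_empty (hd : 4 ≤ d) (hR : d ≤ R)
    (hpR : ∀ i : Fin d, 2 * |p i| ≤ R) {n : ℕ} (hm : 1 ≤ m) (hmn : m < n)
    {L : Set (EuclideanSpace ℝ (Fin d))} (hL : IsLine L)
    (hmeets : meets L (cylOnePiece d R m) (bigBox d p R m 1)) :
    L ∩ cylOnePiece d R n = ∅ := by
  rw [Set.eq_empty_iff_forall_notMem]
  rintro B ⟨hBL, hB⟩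
  obtain ⟨⟨A, hAL, hA⟩, ⟨C, hCL, hC⟩⟩ := hmeets
  set e₁ : Fin d := ⟨0, by omega⟩
  set e₄ : Fin d := ⟨3, by omega⟩
  set s := √(d : ℝ)
  have hR1 : (1 : ℝ) ≤ R := le_trans (by exact_mod_cast (by omega : 1 ≤ d)) hR
  have hAB₁ : 10 * s ≤ |B e₁ - A e₁| := by
    have h := le_abs_sub_of_mem_cylOnePiece hR1 hmn hA hB
    rw [coordNat_of_lt _ e₁.2, coordNat_of_lt _ e₁.2] at h
    exact h
  have hAB₄ : |B e₄ - A e₄| ≤ 2 * s := by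
    linarith [abs_sub (B e₄) (A e₄), abs_apply_le_of_mem_cylOne hB.1 (j := e₄) three_ne_zero,
      abs_apply_le_of_mem_cylOne hA.1 (j := e₄) three_ne_zero]
  have hAC₁ := abs_apply_sub_le_of_mem_bigBox_of_mem_cylOnePiece hR1 hm hpR hC hA e₁ rfl
  have hAC₄ := le_abs_apply_sub_of_mem_bigBox_of_mem_cylOne hd hR hm hpR hC hA.1 e₄ rfl
  have hs : 0 < s := Real.sqrt_pos.2 (by exact_mod_cast (by omega : 0 < d))
  have hRm : 0 < R ^ m := by positivity
  have : 10 * s * (38 * R ^ m) ≤ 2 * s * (2 * R ^ m) :=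
    calc 10 * s * (38 * R ^ m) ≤ |B e₁ - A e₁| * |C e₄ - A e₄| := by gcongr
      _ = |B e₄ - A e₄| * |C e₁ - A e₁| := by
        rw [← abs_mul, ← abs_mul, hL.sub_mul_sub_comm hAL hBL hCL]
      _ ≤ 2 * s * (2 * R ^ m) := by gcongr
  linarith [mul_pos hs hRm]

end

theorem stmt10 (d : ℕ) (hd : 4 ≤ d) :
    ∃ R₀ : ℝ, ∀ p : EuclideanSpace ℝ (Fin d),
      coordNat p 0 = 0 → coordNat p 1 = 0 →
      ∀ R : ℝ, R₀ ≤ R → (∀ i : Fin d, 2 * |p i| ≤ R) →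
      ∀ m n : ℕ, 1 ≤ m → 1 ≤ n → m ≠ n →
      ∀ L : Set (EuclideanSpace ℝ (Fin d)), IsLine L →
        ¬ (meets L (cylOnePiece d R m) (bigBox d p R m 1) ∧
           meets L (cylOnePiece d R n) (bigBox d p R n 1)) := by
  refine ⟨d, fun p _ _ R hR hpR m n hm hn hmn L hL ⟨hmeets_m, hmeets_n⟩ => ?_⟩
  rcases hmn.lt_or_gt with hlt | hgt
  · simpa [hL.inter_cylOnePiece_eq_empty hd hR hpR hm hlt hmeets_m] using hmeets_n.1
  · simpa [hL.inter_cylOnePiece_eq_empty hd hR hpR hn hgt hmeets_n] using hmeets_m.1
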